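/- arXiv:math-ph/0209015 — 3 statements merged into one kernel-verified Lean document; each statement's English description precedes it below -/
import Mathlib

section
/- Let mu >= 2 and 1 <= nu < mu. Let u_1,...,u_mu and a_1,...,a_mu be nonzero real numbers and let lambda_1,...,lambda_mu be real numbers. Let M be the mu x mu real matrix defined as follows: for each row i = 1,...,mu-1, M_{i,1} = -1/u_1, M_{i,i+1} = 1/u_{i+1} if i+1 <= nu and M_{i,i+1} = -1/u_{i+1} if i+1 > nu, and all other entries of row i are zero; and the last row is M_{mu,l} = -lambda_l/(u_l a_l) for l = 1,...,mu. Then det M = ((-1)^{nu+1} / Prod_{l=1}^{mu} u_l) * ( - Sum_{l=1}^{nu} lambda_l/a_l + Sum_{l=nu+1}^{mu} lambda_l/a_l ). In particular, if u_l > 0 and a_l > 0 for all l, lambda_l < 0 for l <= nu, and lambda_l > 0 for l > nu, then det M != 0, so M is invertible. -/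
/-!
The first `μ - 1` rows of `M` have the form `d_{i+1} e_{i+1} - d_1 e_1` with `d_l = ±1/u_l`, so
the vector `x_l = 1/d_l` annihilates them and `M x` is a multiple of the last unit vector, namely
`(∑_l r_l / d_l) e_μ` where `r` is the last row. Cramer's rule for the first column and Laplace
expansion along it then give `det M = (-1)^(μ-1) (∏_l d_l) (∑_l r_l / d_l)`. Substituting
`d_l`, `r_l = -λ_l / (u_l a_l)` yields the formula, and under the sign conditions every term of
`-∑_{l ≤ ν} λ_l / a_l + ∑_{l > ν} λ_l / a_l` is positive.
-/

open Finset

namespace Matrix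

section CommRing

variable {R : Type*} [CommRing R] {n : ℕ}

theorem cramer_mulVec_self (A : Matrix (Fin n) (Fin n) R) (v : Fin n → R) :
    cramer A (A *ᵥ v) = A.det • v := by
  rw [cramer_eq_adjugate_mulVec, mulVec_mulVec, adjugate_mul, smul_mulVec, one_mulVec]

theorem det_mul_eq_of_mulVec_eq_single {A : Matrix (Fin (n + 1)) (Fin (n + 1)) R}
    {v : Fin (n + 1) → R} {x : R} (hAv : A *ᵥ v = Pi.single (Fin.last n) x) :
    A.det * v 0 = (-1) ^ n * x * (A.submatrix Fin.castSucc Fin.succ).det := by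
  have h := congrFun (cramer_mulVec_self A v) 0
  rw [hAv, cramer_apply, det_succ_column_zero, sum_eq_single (Fin.last n)] at h
  · have hminor : (A.updateCol 0 (Pi.single (Fin.last n) x)).submatrix Fin.castSucc Fin.succ =
        A.submatrix Fin.castSucc Fin.succ := by
      ext i j
      simp
    simpa [hminor] using h.symm
  · intro i _ hi
    simp [hi]
  · simp

def starMatrix (d r : Fin (n + 1) → R) : Matrix (Fin (n + 1)) (Fin (n + 1)) R :=
  of (Fin.snoc (fun i => Pi.single i.succ (d i.succ) - Pi.single 0 (d 0)) r)

@[simp]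
theorem starMatrix_castSucc (d r : Fin (n + 1) → R) (i : Fin n) :
    starMatrix d r i.castSucc = Pi.single i.succ (d i.succ) - Pi.single 0 (d 0) := by
  ext j
  simp [starMatrix]

@[simp]
theorem starMatrix_last (d r : Fin (n + 1) → R) : starMatrix d r (Fin.last n) = r := by
  ext j
  simp [starMatrix]

theorem starMatrix_submatrix_castSucc_succ (d r : Fin (n + 1) → R) :
    (starMatrix d r).submatrix Fin.castSucc Fin.succ = diagonal fun i => d i.succ := by
  ext i j
  simp [diagonal_apply, Pi.single_apply, eq_comm]

end CommRing

section Field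

variable {K : Type*} [Field K] {n : ℕ}

theorem starMatrix_mulVec_inv {d : Fin (n + 1) → K} (hd : ∀ j, d j ≠ 0)
    (r : Fin (n + 1) → K) :
    starMatrix d r *ᵥ (fun j => (d j)⁻¹) = Pi.single (Fin.last n) (∑ j, r j / d j) := by
  ext i
  induction i using Fin.lastCases with
  | last => simp [mulVec, dotProduct, div_eq_mul_inv]
  | cast i =>
    rw [mulVec, starMatrix_castSucc, sub_dotProduct, single_dotProduct, single_dotProduct,
      mul_inv_cancel₀ (hd _), mul_inv_cancel₀ (hd _), sub_self,
      Pi.single_eq_of_ne (Fin.castSucc_ne_last i)]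

theorem det_starMatrix {d : Fin (n + 1) → K} (hd : ∀ j, d j ≠ 0) (r : Fin (n + 1) → K) :
    (starMatrix d r).det = (-1) ^ n * (∏ j, d j) * ∑ j, r j / d j := by
  have h := det_mul_eq_of_mulVec_eq_single (starMatrix_mulVec_inv hd r)
  rw [starMatrix_submatrix_castSucc_succ, det_diagonal] at h
  rw [(mul_inv_eq_iff_eq_mul₀ (hd 0)).1 h, Fin.prod_univ_succ]
  ring

end Field

end Matrix

@[to_additive]
theorem Fin.prod_univ_succ_eq_prod_Icc {M : Type*} [CommMonoid M] (n : ℕ) (f : ℕ → M) :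
    ∏ j : Fin n, f (j + 1) = ∏ l ∈ Icc 1 n, f l := by
  rw [Fin.prod_univ_eq_prod_range (fun j => f (j + 1)), range_eq_Ico, prod_Ico_add', zero_add,
    Ico_add_one_right_eq_Icc]

theorem Nat.Icc_one_eq_Ioc_zero : Icc 1 = Ioc 0 := funext (Icc_add_one_left_eq_Ioc 0)

theorem neg_div_mul_div_div_of_mul_self_eq_one {K : Type*} [Field K] {s u x : K} (hs : s * s = 1)
    (hu : u ≠ 0) (a : K) : -x / (u * a) / (s / u) = -(s * (x / a)) := by
  rw [div_mul_eq_div_div_swap, div_div_div_cancel_right₀ hu, div_eq_mul_inv,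
    inv_eq_of_mul_eq_one_left hs, neg_div]
  ring

namespace Junction

open Matrix

def branchSign (ν l : ℕ) : ℝ := if l ≤ ν then 1 else -1

theorem branchSign_of_le {ν l : ℕ} (h : l ≤ ν) : branchSign ν l = 1 := if_pos h

theorem branchSign_of_lt {ν l : ℕ} (h : ν < l) : branchSign ν l = -1 := if_neg h.not_ge

theorem branchSign_mul_self (ν l : ℕ) : branchSign ν l * branchSign ν l = 1 := by
  unfold branchSign
  split_ifs <;> norm_num

theorem branchSign_ne_zero (ν l : ℕ) : branchSign ν l ≠ 0 :=
  left_ne_zero_of_mul_eq_one (branchSign_mul_self ν l)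

theorem sum_Icc_branchSign_mul {ν μ : ℕ} (h : ν ≤ μ) (f : ℕ → ℝ) :
    ∑ l ∈ Icc 1 μ, branchSign ν l * f l =
      ∑ l ∈ Icc 1 ν, f l - ∑ l ∈ Icc (ν + 1) μ, f l := by
  rw [Icc_add_one_left_eq_Ioc, Nat.Icc_one_eq_Ioc_zero,
    ← sum_Ioc_consecutive _ (Nat.zero_le ν) h, sub_eq_add_neg, ← sum_neg_distrib]
  congr 1 <;> refine sum_congr rfl fun l hl => ?_
  · rw [branchSign_of_le (mem_Ioc.1 hl).2, one_mul]
  · rw [branchSign_of_lt (mem_Ioc.1 hl).1, neg_one_mul]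

theorem prod_Icc_branchSign {ν μ : ℕ} (h : ν ≤ μ) :
    ∏ l ∈ Icc 1 μ, branchSign ν l = (-1) ^ (μ - ν) := by
  rw [Nat.Icc_one_eq_Ioc_zero, ← prod_Ioc_consecutive _ (Nat.zero_le ν) h,
    prod_eq_one fun l hl => branchSign_of_le (mem_Ioc.1 hl).2, one_mul,
    prod_congr rfl fun l hl => branchSign_of_lt (mem_Ioc.1 hl).1, prod_const, Nat.card_Ioc]

theorem eq_starMatrix {ν n : ℕ} (hν : 1 ≤ ν) (u aa lam : ℕ → ℝ)
    {M : Matrix (Fin (n + 1)) (Fin (n + 1)) ℝ}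
    (hM : ∀ i j : Fin (n + 1),
      M i j =
        if (i : ℕ) < n + 1 - 1 then
          (if (j : ℕ) = 0 then -1 / u 1
           else if (j : ℕ) = (i : ℕ) + 1 then
             (if (j : ℕ) + 1 ≤ ν then 1 / u ((j : ℕ) + 1) else -1 / u ((j : ℕ) + 1))
           else 0)
        else -lam ((j : ℕ) + 1) / (u ((j : ℕ) + 1) * aa ((j : ℕ) + 1))) :
    M = starMatrix (fun j => branchSign ν (j + 1) / u (j + 1))
      (fun j => -lam (j + 1) / (u (j + 1) * aa (j + 1))) := by
  ext i j
  rw [hM]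
  induction i using Fin.lastCases with
  | last => simp
  | cast i =>
    rw [if_pos (by simp), starMatrix_castSucc, Pi.sub_apply, Pi.single_apply, Pi.single_apply]
    cases j using Fin.cases with
    | zero => simp [branchSign_of_le hν, neg_div, (Fin.succ_ne_zero i).symm]
    | succ j =>
      simp only [Fin.val_succ, Fin.val_castSucc, Fin.succ_inj, Fin.succ_ne_zero, if_false,
        sub_zero, Nat.add_one_ne_zero, Nat.add_right_cancel_iff, Fin.val_inj]
      split_ifs with hji hin
      · subst hji
        rw [branchSign_of_le hin]
      · subst hji
        rw [branchSign_of_lt (by omega)]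
      · rfl

theorem det_starMatrix_eq {ν k : ℕ} (u aa lam : ℕ → ℝ)
    (hu : ∀ l, 1 ≤ l → l ≤ ν + k + 1 → u l ≠ 0) :
    (starMatrix (n := ν + k) (fun j => branchSign ν (j + 1) / u (j + 1))
        (fun j => -lam (j + 1) / (u (j + 1) * aa (j + 1)))).det =
      ((-1 : ℝ) ^ (ν + 1) / ∏ l ∈ Icc 1 (ν + k + 1), u l) *
        (-(∑ l ∈ Icc 1 ν, lam l / aa l) +
          ∑ l ∈ Icc (ν + 1) (ν + k + 1), lam l / aa l) := by
  have hu' (j : Fin (ν + k + 1)) : u (j + 1) ≠ 0 := hu _ (by omega) (by omega)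
  have hsign : (-1 : ℝ) ^ (ν + k) * (-1) ^ (k + 1) = (-1) ^ (ν + 1) := by
    rw [← pow_add, show ν + k + (k + 1) = ν + 1 + 2 * k by ring, pow_add, pow_mul, neg_one_sq,
      one_pow, mul_one]
  rw [det_starMatrix fun j => div_ne_zero (branchSign_ne_zero _ _) (hu' j), prod_div_distrib,
    Fin.prod_univ_succ_eq_prod_Icc (f := branchSign ν), Fin.prod_univ_succ_eq_prod_Icc (f := u),
    prod_Icc_branchSign (by omega), show ν + k + 1 - ν = k + 1 by omega,
    sum_congr rfl fun j _ =>
      neg_div_mul_div_div_of_mul_self_eq_one (branchSign_mul_self _ _) (hu' j) _,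
    sum_neg_distrib,
    Fin.sum_univ_succ_eq_sum_Icc (f := fun l => branchSign ν l * (lam l / aa l)),
    sum_Icc_branchSign_mul (by omega)]
  linear_combination
    (-(∑ l ∈ Icc 1 ν, lam l / aa l - ∑ l ∈ Icc (ν + 1) (ν + k + 1), lam l / aa l) /
      ∏ l ∈ Icc 1 (ν + k + 1), u l) * hsign

end Junction

open Junction in
theorem junction_matrix_det_general
    (μ ν : ℕ) (hν1 : 1 ≤ ν) (hνμ : ν < μ)
    (u aa lam : ℕ → ℝ)
    (hu : ∀ l, 1 ≤ l → l ≤ μ → u l ≠ 0)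
    (M : Matrix (Fin μ) (Fin μ) ℝ)
    (hM : ∀ i j : Fin μ,
      M i j =
        if (i : ℕ) < μ - 1 then
          (if (j : ℕ) = 0 then -1 / u 1
           else if (j : ℕ) = (i : ℕ) + 1 then
             (if (j : ℕ) + 1 ≤ ν then 1 / u ((j : ℕ) + 1) else -1 / u ((j : ℕ) + 1))
           else 0)
        else -lam ((j : ℕ) + 1) / (u ((j : ℕ) + 1) * aa ((j : ℕ) + 1))) :
    M.det = ((-1 : ℝ) ^ (ν + 1) / ∏ l ∈ Finset.Icc 1 μ, u l) *
        (-(∑ l ∈ Finset.Icc 1 ν, lam l / aa l)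
          + ∑ l ∈ Finset.Icc (ν + 1) μ, lam l / aa l) ∧
    ((∀ l, 1 ≤ l → l ≤ μ → 0 < u l ∧ 0 < aa l) →
      (∀ l, 1 ≤ l → l ≤ ν → lam l < 0) →
      (∀ l, ν < l → l ≤ μ → 0 < lam l) →
      M.det ≠ 0 ∧ IsUnit M) := by
  obtain ⟨k, rfl⟩ := Nat.exists_eq_add_of_lt hνμ
  have hdet := eq_starMatrix hν1 u aa lam hM ▸ det_starMatrix_eq u aa lam hu
  refine ⟨hdet, fun hpos hin hout => ?_⟩
  have hprod : 0 < ∏ l ∈ Icc 1 (ν + k + 1), u l :=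
    prod_pos fun l hl => (hpos l (mem_Icc.1 hl).1 (mem_Icc.1 hl).2).1
  have hin_sum : ∑ l ∈ Icc 1 ν, lam l / aa l ≤ 0 := by
    refine sum_nonpos fun l hl => div_nonpos_of_nonpos_of_nonneg ?_ ?_ <;> rw [mem_Icc] at hl
    · exact (hin l hl.1 hl.2).le
    · exact (hpos l hl.1 (by omega)).2.le
  have hout_sum : 0 < ∑ l ∈ Icc (ν + 1) (ν + k + 1), lam l / aa l := by
    refine sum_pos (fun l hl => div_pos ?_ ?_) ⟨ν + 1, by simp⟩ <;> rw [mem_Icc] at hl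
    · exact hout l (by omega) hl.2
    · exact (hpos l (by omega) hl.2).2
  have hne : M.det ≠ 0 := by
    rw [hdet]
    exact mul_ne_zero (div_ne_zero (pow_ne_zero _ (by norm_num)) hprod.ne') (by linarith)
  exact ⟨hne, M.isUnit_iff_isUnit_det.2 hne.isUnit⟩

/-- Determinant of the junction-condition coefficient matrix.  The matrix `M`
(with `μ ≥ 2` rows/columns, `1 ≤ ν < μ`) has, in each of its first `μ - 1` rows
(Lean row index `i` corresponding to paper row `i+1`), the entry `-1/u₁` in the
first column and `±1/u_{i+2}` in column `i+1` (sign `+` for columns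
corresponding to paper indices `≤ ν`, `-` otherwise), and last row
`(-λ_l/(u_l a_l))_l`.  Here `u, a, λ : ℕ → ℝ` are paper-indexed `1, ..., μ`,
so the Lean column `j` corresponds to the paper index `j + 1`. -/
theorem junction_matrix_det
    (μ ν : ℕ) (hμ : 2 ≤ μ) (hν1 : 1 ≤ ν) (hνμ : ν < μ)
    (u aa lam : ℕ → ℝ)
    (hu : ∀ l, 1 ≤ l → l ≤ μ → u l ≠ 0) (ha : ∀ l, 1 ≤ l → l ≤ μ → aa l ≠ 0)
    (M : Matrix (Fin μ) (Fin μ) ℝ)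
    (hM : ∀ i j : Fin μ,
      M i j =
        if (i : ℕ) < μ - 1 then
          (if (j : ℕ) = 0 then -1 / u 1
           else if (j : ℕ) = (i : ℕ) + 1 then
             (if (j : ℕ) + 1 ≤ ν then 1 / u ((j : ℕ) + 1) else -1 / u ((j : ℕ) + 1))
           else 0)
        else -lam ((j : ℕ) + 1) / (u ((j : ℕ) + 1) * aa ((j : ℕ) + 1))) :
    M.det = ((-1 : ℝ) ^ (ν + 1) / ∏ l ∈ Finset.Icc 1 μ, u l) *
        (-(∑ l ∈ Finset.Icc 1 ν, lam l / aa l)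
          + ∑ l ∈ Finset.Icc (ν + 1) μ, lam l / aa l) ∧
    ((∀ l, 1 ≤ l → l ≤ μ → 0 < u l ∧ 0 < aa l) →
      (∀ l, 1 ≤ l → l ≤ ν → lam l < 0) →
      (∀ l, ν < l → l ≤ μ → 0 < lam l) →
      M.det ≠ 0 ∧ IsUnit M) :=
  junction_matrix_det_general μ ν hν1 hνμ u aa lam hu M hM
end

section
/- Let rho > 0 and mu >= 0 be constants, let A : R x R -> R, (x,p) -> A(x,p), be continuously differentiable, and let P, Q be continuously differentiable real functions on an open subset of R^2 such that A(x, P(x,t)) > 0 and (dA/dp)(x, P(x,t)) != 0 at every point. Suppose P and Q satisfy the conservation and momentum equations dQ/dx + d/dt[ A(x, P(x,t)) ] = 0 and dQ/dt + d/dx[ Q^2 / A(x, P(x,t)) ] = -(A/rho) dP/dx - 8 pi mu Q / (rho A), where A and its partial derivatives are evaluated at (x, P(x,t)). Then P and Q satisfy dP/dt + a dQ/dx = 0 and dQ/dt + b dP/dx + 2c dQ/dx = g, with a = 1/A_p, b = A/rho - Q^2 A_p / A^2, c = Q/A, and g = Q^2 A_x / A^2 - 8 pi mu Q / (rho A), where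 A_p = (dA/dp)(x, P(x,t)) and A_x = (dA/dx)(x, P(x,t)). -/
/-!
Along a curve `r ↦ (α r, β r)` the chain rule gives
`d/dr A(α, β) = α' A_x + β' A_p`. Applied to `s ↦ (x, P(x,s))` it turns the mass equation into
`Q_x + A_p P_t = 0`, which is the pressure equation after division by `A_p ≠ 0`. Applied to
`y ↦ (y, P(y,t))` together with the quotient rule it expands
`(Q²/A)_x = 2 Q Q_x / A - Q² (A_x + A_p P_x) / A²`, and the momentum equation rearranges into
the second equation of the general system.
-/

section TwoVariableChainRule

variable {f : ℝ → ℝ → ℝ}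

theorem hasDerivAt_uncurry_comp_fderiv {α β : ℝ → ℝ} {α' β' s : ℝ}
    (hf : DifferentiableAt ℝ (fun z : ℝ × ℝ => f z.1 z.2) (α s, β s))
    (hα : HasDerivAt α α' s) (hβ : HasDerivAt β β' s) :
    HasDerivAt (fun r => f (α r) (β r))
      (fderiv ℝ (fun z : ℝ × ℝ => f z.1 z.2) (α s, β s) (α', β')) s :=
  (hf.hasFDerivAt.comp_hasDerivAt s (hα.prodMk hβ) :)

theorem hasDerivAt_uncurry_left {x p : ℝ}
    (hf : DifferentiableAt ℝ (fun z : ℝ × ℝ => f z.1 z.2) (x, p)) :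
    HasDerivAt (fun y => f y p) (fderiv ℝ (fun z : ℝ × ℝ => f z.1 z.2) (x, p) (1, 0)) x :=
  hasDerivAt_uncurry_comp_fderiv (α := id) (β := fun _ => p) hf
    (hasDerivAt_id x) (hasDerivAt_const x p)

theorem hasDerivAt_uncurry_right {x p : ℝ}
    (hf : DifferentiableAt ℝ (fun z : ℝ × ℝ => f z.1 z.2) (x, p)) :
    HasDerivAt (f x) (fderiv ℝ (fun z : ℝ × ℝ => f z.1 z.2) (x, p) (0, 1)) p :=
  hasDerivAt_uncurry_comp_fderiv (α := fun _ => x) (β := id) hf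
    (hasDerivAt_const p x) (hasDerivAt_id p)

theorem hasDerivAt_uncurry_comp {α β : ℝ → ℝ} {α' β' s : ℝ}
    (hf : DifferentiableAt ℝ (fun z : ℝ × ℝ => f z.1 z.2) (α s, β s))
    (hα : HasDerivAt α α' s) (hβ : HasDerivAt β β' s) :
    HasDerivAt (fun r => f (α r) (β r))
      (α' * deriv (fun y => f y (β s)) (α s) + β' * deriv (f (α s)) (β s)) s := by
  have hsplit : ((α', β') : ℝ × ℝ) = α' • ((1 : ℝ), (0 : ℝ)) + β' • ((0 : ℝ), (1 : ℝ)) := by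
    simp
  rw [(hasDerivAt_uncurry_left hf).deriv, (hasDerivAt_uncurry_right hf).deriv,
    ← smul_eq_mul, ← smul_eq_mul, ← map_smul, ← map_smul, ← map_add, ← hsplit]
  exact hasDerivAt_uncurry_comp_fderiv hf hα hβ

end TwoVariableChainRule

theorem blood_flow_model_is_special_case_general
    (ρ mu : ℝ)
    (A : ℝ → ℝ → ℝ) (hA : ContDiff ℝ 1 fun z : ℝ × ℝ => A z.1 z.2)
    (Ω : Set (ℝ × ℝ))
    (P Q : ℝ → ℝ → ℝ)
    (hP : ∀ z ∈ Ω, DifferentiableAt ℝ (fun w : ℝ × ℝ => P w.1 w.2) z)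
    (hQ : ∀ z ∈ Ω, DifferentiableAt ℝ (fun w : ℝ × ℝ => Q w.1 w.2) z)
    (hApos : ∀ x t : ℝ, (x, t) ∈ Ω → 0 < A x (P x t))
    (hAp : ∀ x t : ℝ, (x, t) ∈ Ω → deriv (A x) (P x t) ≠ 0)
    (hmass : ∀ x t : ℝ, (x, t) ∈ Ω →
      deriv (fun y => Q y t) x + deriv (fun s => A x (P x s)) t = 0)
    (hmom : ∀ x t : ℝ, (x, t) ∈ Ω →
      deriv (fun s => Q x s) t + deriv (fun y => (Q y t) ^ 2 / A y (P y t)) x =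
        -(A x (P x t) / ρ) * deriv (fun y => P y t) x
          - 8 * Real.pi * mu * Q x t / (ρ * A x (P x t))) :
    ∀ x t : ℝ, (x, t) ∈ Ω →
      (deriv (fun s => P x s) t
          + (1 / deriv (A x) (P x t)) * deriv (fun y => Q y t) x = 0) ∧
      (deriv (fun s => Q x s) t
          + (A x (P x t) / ρ - (Q x t) ^ 2 * deriv (A x) (P x t) / (A x (P x t)) ^ 2)
              * deriv (fun y => P y t) x
          + 2 * (Q x t / A x (P x t)) * deriv (fun y => Q y t) x
        = (Q x t) ^ 2 * deriv (fun y => A y (P x t)) x / (A x (P x t)) ^ 2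
            - 8 * Real.pi * mu * Q x t / (ρ * A x (P x t))) := by
  intro x t hx
  have hAd := hA.differentiable one_ne_zero (x, P x t)
  have hPx := (hasDerivAt_uncurry_left (hP _ hx)).differentiableAt.hasDerivAt
  have hPt := (hasDerivAt_uncurry_right (hP _ hx)).differentiableAt.hasDerivAt
  have hQx := (hasDerivAt_uncurry_left (hQ _ hx)).differentiableAt.hasDerivAt
  have hA_t : HasDerivAt (fun s => A x (P x s))
      (0 * deriv (fun y => A y (P x t)) x + deriv (fun s => P x s) t * deriv (A x) (P x t)) t :=
    hasDerivAt_uncurry_comp hAd (hasDerivAt_const t x) hPt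
  have hA_x : HasDerivAt (fun y => A y (P y t))
      (1 * deriv (fun y => A y (P x t)) x + deriv (fun y => P y t) x * deriv (A x) (P x t)) x :=
    hasDerivAt_uncurry_comp hAd (hasDerivAt_id x) hPx
  have hAne := (hApos x t hx).ne'
  have hmass' := hmass x t hx
  have hmom' := hmom x t hx
  rw [hA_t.deriv] at hmass'
  rw [((hQx.fun_pow 2).fun_div hA_x hAne).deriv] at hmom'
  constructor
  · field_simp [hAp x t hx]
    linear_combination hmass'
  · field_simp at hmom' ⊢
    linear_combination hmom'

/-- The blood-flow model (conservation of mass and Navier–Stokes momentum with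
a pressure-dependent cross-sectional area `A(x,P)`) is a special case of the
general first-order system `P_t + a Q_x = f`, `Q_t + b P_x + 2c Q_x = g` with
`f = 0`, `a = 1/A_p`, `b = A/ρ - Q² A_p/A²`, `c = Q/A`, and
`g = Q² A_x/A² - 8πμQ/(ρA)`. -/
theorem blood_flow_model_is_special_case
    (ρ mu : ℝ) (hρ : 0 < ρ) (hmu : 0 ≤ mu)
    (A : ℝ → ℝ → ℝ) (hA : ContDiff ℝ 1 fun z : ℝ × ℝ => A z.1 z.2)
    (Ω : Set (ℝ × ℝ)) (hΩ : IsOpen Ω)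
    (P Q : ℝ → ℝ → ℝ)
    (hP : ∀ z ∈ Ω, DifferentiableAt ℝ (fun w : ℝ × ℝ => P w.1 w.2) z)
    (hQ : ∀ z ∈ Ω, DifferentiableAt ℝ (fun w : ℝ × ℝ => Q w.1 w.2) z)
    (hApos : ∀ x t : ℝ, (x, t) ∈ Ω → 0 < A x (P x t))
    (hAp : ∀ x t : ℝ, (x, t) ∈ Ω → deriv (A x) (P x t) ≠ 0)
    (hmass : ∀ x t : ℝ, (x, t) ∈ Ω →
      deriv (fun y => Q y t) x + deriv (fun s => A x (P x s)) t = 0)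
    (hmom : ∀ x t : ℝ, (x, t) ∈ Ω →
      deriv (fun s => Q x s) t + deriv (fun y => (Q y t) ^ 2 / A y (P y t)) x =
        -(A x (P x t) / ρ) * deriv (fun y => P y t) x
          - 8 * Real.pi * mu * Q x t / (ρ * A x (P x t))) :
    ∀ x t : ℝ, (x, t) ∈ Ω →
      (deriv (fun s => P x s) t
          + (1 / deriv (A x) (P x t)) * deriv (fun y => Q y t) x = 0) ∧
      (deriv (fun s => Q x s) t
          + (A x (P x t) / ρ - (Q x t) ^ 2 * deriv (A x) (P x t) / (A x (P x t)) ^ 2)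
              * deriv (fun y => P y t) x
          + 2 * (Q x t / A x (P x t)) * deriv (fun y => Q y t) x
        = (Q x t) ^ 2 * deriv (fun y => A y (P x t)) x / (A x (P x t)) ^ 2
            - 8 * Real.pi * mu * Q x t / (ρ * A x (P x t))) :=
  blood_flow_model_is_special_case_general ρ mu A hA Ω P Q hP hQ hApos hAp hmass hmom
end

section
/- Let C > 0, 0 < h, and let M >= 1 be an integer. Let (e_m)_{m >= 0} and (E_m)_{m >= 1} be sequences of real numbers such that: e_m >= 0 for all m; e_0 = 0; e_1 <= E_1; E_1 >= 0; E_{m+1} = (1 + 3Ch) E_m + C h^2 for all m >= 1; e_{m+1} <= e_m + C (h^2 + h e_m + e_m e_{m-1} + e_m^2) for all m >= 1; and E_m <= h for all 1 <= m <= M. Then e_m <= E_m for all 1 <= m <= M + 1. In particular e_m <= h for all 1 <= m <= M. -/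
/-- Discrete comparison lemma for the convergence proof of the
finite-difference scheme: the error sequence `e_m`, satisfying the quadratic
recursion `e_{m+1} ≤ e_m + C (h² + h e_m + e_m e_{m-1} + e_m²)` with `e_0 = 0`,
is dominated by the solution `E_m` of the linear difference equation
`E_{m+1} = (1 + 3Ch) E_m + C h²`, as long as `E_m ≤ h` on the range
considered; in particular `e_m ≤ h` there. -/
theorem discrete_comparison_lemma
    (C h : ℝ) (hC : 0 < C) (hh : 0 < h) (M : ℕ) (hM : 1 ≤ M)
    (e E : ℕ → ℝ)
    (he_nonneg : ∀ m : ℕ, 0 ≤ e m) (he0 : e 0 = 0)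
    (he1 : e 1 ≤ E 1) (hE1 : 0 ≤ E 1)
    (hErec : ∀ m : ℕ, 1 ≤ m → E (m + 1) = (1 + 3 * C * h) * E m + C * h ^ 2)
    (herec : ∀ m : ℕ, 1 ≤ m →
      e (m + 1) ≤ e m + C * (h ^ 2 + h * e m + e m * e (m - 1) + (e m) ^ 2))
    (hEh : ∀ m : ℕ, 1 ≤ m → m ≤ M → E m ≤ h) :
    (∀ m : ℕ, 1 ≤ m → m ≤ M + 1 → e m ≤ E m) ∧
    (∀ m : ℕ, 1 ≤ m → m ≤ M → e m ≤ h) := by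
  have key : ∀ m : ℕ, 1 ≤ m → m ≤ M + 1 → e m ≤ E m := by
    intro m
    induction m using Nat.strong_induction_on with
    | _ m ih =>
      intro h1 h2
      rcases Nat.lt_or_ge m 2 with hm2 | hm2
      · interval_cases m
        exact he1
      · obtain ⟨k, rfl⟩ : ∃ k, m = k + 1 := ⟨m - 1, by omega⟩
        have hk1 : 1 ≤ k := by omega
        have hkM : k ≤ M := by omega
        have hEk : E k ≤ h := hEh k hk1 hkM
        have hek : e k ≤ E k := ih k (by omega) hk1 (by omega)
        have hekh : e k ≤ h := hek.trans hEk
        have hprev : e (k - 1) ≤ h := by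
          rcases eq_or_lt_of_le hk1 with h' | h'
          · rw [← h']; simp [he0]; linarith
          · exact (ih (k - 1) (by omega) (by omega) (by omega)).trans
              (hEh (k - 1) (by omega) (by omega))
        have hr := herec k hk1
        have hEr := hErec k hk1
        have h1 := he_nonneg k
        have h2 := he_nonneg (k - 1)
        have hEk0 : 0 ≤ E k := h1.trans hek
        have t1 : e k * e (k - 1) ≤ E k * h := mul_le_mul hek hprev h2 hEk0
        have t2 : e k ^ 2 ≤ E k * h := by nlinarith
        have t3 : h * e k ≤ h * E k := mul_le_mul_of_nonneg_left hek hh.le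
        nlinarith [mul_le_mul_of_nonneg_left t1 hC.le, mul_le_mul_of_nonneg_left t2 hC.le, mul_le_mul_of_nonneg_left t3 hC.le]
  refine ⟨key, fun m h1 h2 => (key m h1 (by omega)).trans (hEh m h1 h2)⟩
end
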